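/- For integers k ≥ i ≥ m ≥ 1: [k choose m]_q·[k-m choose i-m]_q - [k choose i]_q·[i-1 choose m-1]_q = q^m·[k choose i]_q·[i-1 choose m]_q. -/

import Mathlib

open Finset

noncomputable section

/-- q-number [n]_q = 1 + q + ... + q^{n-1} -/
def qNum (q : ℝ) (n : ℕ) : ℝ := ∑ i ∈ Finset.range n, q ^ i

/-- q-factorial [n]_q! -/
def qFact (q : ℝ) (n : ℕ) : ℝ := ∏ i ∈ Finset.range n, qNum q (i + 1)

/-- Gaussian binomial coefficient -/
def qBinom (q : ℝ) (n k : ℕ) : ℝ :=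
  if k ≤ n then qFact q n / (qFact q (n - k) * qFact q k) else 0

/-- q-Hermite polynomials H_n(x|q) -/
def qHermite (q x : ℝ) : ℕ → ℝ
  | 0 => 1
  | 1 => x
  | n + 2 => x * qHermite q x (n + 1) - qNum q (n + 1) * qHermite q x n

/-- Chebyshev polynomials of the second kind -/
def chebU (x : ℝ) : ℕ → ℝ
  | 0 => 1
  | 1 => 2 * x
  | n + 2 => 2 * x * chebU x (n + 1) - chebU x n

/-- probabilistic Hermite polynomials He_n -/
def hermiteHe (x : ℝ) : ℕ → ℝ
  | 0 => 1
  | 1 => x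
  | n + 2 => x * hermiteHe x (n + 1) - (n + 1 : ℝ) * hermiteHe x n

/-- Al-Salam–Chihara polynomials P_n(x|y,ρ,q) -/
def ascP (q y ρ x : ℝ) : ℕ → ℝ
  | 0 => 1
  | 1 => x - ρ * y
  | n + 2 => (x - ρ * y * q ^ (n + 1)) * ascP q y ρ x (n + 1)
      - (1 - ρ ^ 2 * q ^ n) * qNum q (n + 1) * ascP q y ρ x n

/-
By trinomial revision `[k, m] [k-m, i-m] = [k, i] [i, m]`, the left side is
`[k, i] ([i, m] - [i-1, m-1])`, and the q-Pascal rule `[i, m] = [i-1, m-1] + q^m [i-1, m]` turns the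
bracket into `q^m [i-1, m]`. Both rules are identities between quotients of q-factorials, which
are nonzero for `-1 < q`.
-/

lemma qNum_succ_pos {q : ℝ} (hq : -1 < q) (n : ℕ) : 0 < qNum q (n + 1) :=
  geom_sum_pos' (by linarith) n.succ_ne_zero

lemma qNum_add (q : ℝ) (m n : ℕ) : qNum q (m + n) = qNum q m + q ^ m * qNum q n := by
  simp only [qNum, Finset.sum_range_add, Finset.mul_sum, pow_add]

lemma qFact_zero (q : ℝ) : qFact q 0 = 1 := by
  simp [qFact]

lemma qFact_succ (q : ℝ) (n : ℕ) : qFact q (n + 1) = qFact q n * qNum q (n + 1) :=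
  Finset.prod_range_succ _ n

lemma qFact_ne_zero {q : ℝ} (hq : -1 < q) (n : ℕ) : qFact q n ≠ 0 :=
  Finset.prod_ne_zero_iff.mpr fun i _ => (qNum_succ_pos hq i).ne'

lemma qBinom_of_le (q : ℝ) {n k : ℕ} (h : k ≤ n) :
    qBinom q n k = qFact q n / (qFact q (n - k) * qFact q k) :=
  if_pos h

lemma qBinom_of_lt {q : ℝ} {n k : ℕ} (h : n < k) : qBinom q n k = 0 :=
  if_neg h.not_ge

lemma qBinom_self {q : ℝ} (hq : -1 < q) (n : ℕ) : qBinom q n n = 1 := by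
  rw [qBinom_of_le q le_rfl, Nat.sub_self, qFact_zero, one_mul, div_self (qFact_ne_zero hq n)]

lemma qBinom_mul_qBinom {q : ℝ} (hq : -1 < q) {k i m : ℕ} (hmi : m ≤ i) (hik : i ≤ k) :
    qBinom q k m * qBinom q (k - m) (i - m) = qBinom q k i * qBinom q i m := by
  obtain ⟨a, rfl⟩ := Nat.exists_eq_add_of_le hmi
  obtain ⟨b, rfl⟩ := Nat.exists_eq_add_of_le hik
  rw [qBinom_of_le q (by omega : m ≤ m + a + b),
    qBinom_of_le q (by omega : m + a - m ≤ m + a + b - m), qBinom_of_le q hik,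
    qBinom_of_le q hmi, show m + a + b - m = a + b by omega,
    show m + a - m = a by omega, show a + b - a = b by omega, show m + a + b - (m + a) = b by omega]
  field_simp [qFact_ne_zero hq]

lemma qBinom_succ_succ {q : ℝ} (hq : -1 < q) (n k : ℕ) :
    qBinom q (n + 1) (k + 1) = qBinom q n k + q ^ (k + 1) * qBinom q n (k + 1) := by
  rcases lt_trichotomy n k with hnk | rfl | hkn
  · simp [qBinom_of_lt, hnk, hnk.trans (Nat.lt_succ_self k)]
  · simp [qBinom_self hq, qBinom_of_lt]
  obtain ⟨a, rfl⟩ := Nat.exists_eq_add_of_lt hkn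
  rw [qBinom_of_le q (by omega : k + 1 ≤ k + a + 1 + 1),
    qBinom_of_le q (by omega : k ≤ k + a + 1), qBinom_of_le q hkn,
    show k + a + 1 + 1 - (k + 1) = a + 1 by omega, show k + a + 1 - k = a + 1 by omega,
    show k + a + 1 - (k + 1) = a by omega,
    qFact_succ q (k + a + 1), qFact_succ q a, qFact_succ q k,
    show k + a + 1 + 1 = (k + 1) + (a + 1) by ring, qNum_add]
  field_simp [qFact_ne_zero hq, (qNum_succ_pos hq k).ne', (qNum_succ_pos hq a).ne']

theorem qBinom_identity (q : ℝ) (hq : |q| < 1) (k i m : ℕ)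
    (hm : 1 ≤ m) (hmi : m ≤ i) (hik : i ≤ k) :
    qBinom q k m * qBinom q (k - m) (i - m) - qBinom q k i * qBinom q (i - 1) (m - 1) =
      q ^ m * qBinom q k i * qBinom q (i - 1) m := by
  have hq' : -1 < q := (abs_lt.mp hq).1
  obtain ⟨c, rfl⟩ := Nat.exists_eq_add_of_le' hm
  obtain ⟨j, rfl⟩ := Nat.exists_eq_add_of_le' (hm.trans hmi)
  rw [qBinom_mul_qBinom hq' hmi hik, qBinom_succ_succ hq']
  simp only [Nat.add_sub_cancel]
  ring
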